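/- Let G be an n-vertex graph containing vertex-disjoint subsets X, Y, Z of equal size such that the bipartite graphs between X and Y and between Y and Z each have at least (1−δ)|X|² edges, while the bipartite graph between X and Z has at most δ|X|² edges. Then surp(G) ≥ (1/4 − 3δ)|X|². -/
import Mathlib


open Finset

/-- Number of adjacent ordered pairs `(u, v)` with `u ∈ s`, `v ∈ t`. For disjoint `s`, `t`
this is the number of edges between `s` and `t`. -/
def eBetween {n : ℕ} (G : SimpleGraph (Fin n)) [DecidableRel G.Adj]
    (s t : Finset (Fin n)) : ℕ :=
  (Finset.univ.filter fun p : Fin n × Fin n => p.1 ∈ s ∧ p.2 ∈ t ∧ G.Adj p.1 p.2).card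

def cutSize {n : ℕ} (G : SimpleGraph (Fin n)) [DecidableRel G.Adj] (s : Finset (Fin n)) : ℕ :=
  (Finset.univ.filter fun p : Fin n × Fin n => G.Adj p.1 p.2 ∧ p.1 ∈ s ∧ p.2 ∉ s).card

def maxCut {n : ℕ} (G : SimpleGraph (Fin n)) [DecidableRel G.Adj] : ℕ :=
  Finset.univ.powerset.sup (cutSize G)

noncomputable def surplus {n : ℕ} (G : SimpleGraph (Fin n)) [DecidableRel G.Adj] : ℝ :=
  (maxCut G : ℝ) - (G.edgeFinset.card : ℝ) / 2

section Aux

variable {n : ℕ} (G : SimpleGraph (Fin n)) [DecidableRel G.Adj]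

/-- number of adjacent ordered pairs in `s × t` -/
def cnt (s t : Finset (Fin n)) : ℕ := ∑ u ∈ s, ∑ v ∈ t, if G.Adj u v then 1 else 0

lemma cnt_comm (s t : Finset (Fin n)) : cnt G s t = cnt G t s := by
  rw [cnt, Finset.sum_comm]
  refine Finset.sum_congr rfl fun u _ => Finset.sum_congr rfl fun v _ => ?_
  exact if_congr (G.adj_comm v u) rfl rfl

lemma cnt_union_right (s : Finset (Fin n)) {t₁ t₂ : Finset (Fin n)} (h : Disjoint t₁ t₂) :
    cnt G s (t₁ ∪ t₂) = cnt G s t₁ + cnt G s t₂ := by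
  simp [cnt, Finset.sum_union h, Finset.sum_add_distrib]

lemma cnt_union_left {s₁ s₂ : Finset (Fin n)} (t : Finset (Fin n)) (h : Disjoint s₁ s₂) :
    cnt G (s₁ ∪ s₂) t = cnt G s₁ t + cnt G s₂ t := by
  simp [cnt, Finset.sum_union h]

lemma cnt_insert_right (s : Finset (Fin n)) {t : Finset (Fin n)} {r : Fin n} (h : r ∉ t) :
    cnt G s (insert r t) = cnt G s t + cnt G s {r} := by
  have : insert r t = {r} ∪ t := by ext x; simp [Finset.mem_insert]
  rw [this, cnt_union_right G s (by simpa using h)]; ring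

lemma cnt_insert_left {s : Finset (Fin n)} (t : Finset (Fin n)) {r : Fin n} (h : r ∉ s) :
    cnt G (insert r s) t = cnt G s t + cnt G {r} t := by
  have : insert r s = {r} ∪ s := by ext x; simp [Finset.mem_insert]
  rw [this, cnt_union_left G t (by simpa using h)]; ring

lemma cnt_le (s t : Finset (Fin n)) : cnt G s t ≤ s.card * t.card := by
  calc cnt G s t ≤ ∑ u ∈ s, ∑ v ∈ t, 1 := by
        refine Finset.sum_le_sum fun u _ => Finset.sum_le_sum fun v _ => ?_
        split <;> omega
    _ = s.card * t.card := by simp [mul_comm]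

lemma filter_card_eq_cnt (s t : Finset (Fin n)) :
    (Finset.univ.filter fun p : Fin n × Fin n => p.1 ∈ s ∧ p.2 ∈ t ∧ G.Adj p.1 p.2).card
      = cnt G s t := by
  rw [Finset.card_filter, ← Finset.univ_product_univ, Finset.sum_product, cnt]
  have h : ∀ u, (∑ v : Fin n, if u ∈ s ∧ v ∈ t ∧ G.Adj u v then 1 else 0)
      = if u ∈ s then (∑ v : Fin n, if v ∈ t ∧ G.Adj u v then 1 else 0) else 0 := by
    intro u; by_cases hu : u ∈ s <;> simp [hu]
  rw [Finset.sum_congr rfl fun u _ => h u, Finset.sum_ite_mem, Finset.univ_inter]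
  refine Finset.sum_congr rfl fun u _ => ?_
  have h2 : ∀ v, (if v ∈ t ∧ G.Adj u v then (1:ℕ) else 0)
      = if v ∈ t then (if G.Adj u v then 1 else 0) else 0 := by
    intro v; by_cases hv : v ∈ t <;> simp [hv]
  rw [Finset.sum_congr rfl fun v _ => h2 v, Finset.sum_ite_mem, Finset.univ_inter]

lemma cnt_univ_univ : cnt G Finset.univ Finset.univ = 2 * G.edgeFinset.card := by
  rw [← SimpleGraph.sum_degrees_eq_twice_card_edges, cnt]
  refine Finset.sum_congr rfl fun u _ => ?_
  rw [SimpleGraph.degree, SimpleGraph.neighborFinset_eq_filter, Finset.card_filter]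

lemma cutSize_eq_cnt (s : Finset (Fin n)) :
    cutSize G s = cnt G s (Finset.univ \ s) := by
  rw [← filter_card_eq_cnt, cutSize]
  congr 1
  apply Finset.filter_congr
  intro p _
  simp [Finset.mem_sdiff]
  tauto

lemma eBetween_eq_cnt (s t : Finset (Fin n)) : eBetween G s t = cnt G s t :=
  filter_card_eq_cnt G s t

/-- Greedy completion of a partial cut: starting from `S` on one side and everything else on
the other, the vertices of `R` can be placed so that the resulting cut captures all of the
current crossing pairs plus at least half of the edges touching `R`. -/
lemma greedy_cut (R : Finset (Fin n)) : ∀ S : Finset (Fin n), Disjoint S R →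
    ∃ T ⊆ R, cnt G Finset.univ Finset.univ + 4 * cnt G S ((Finset.univ \ R) \ S)
      ≤ cnt G (Finset.univ \ R) (Finset.univ \ R) + 4 * cutSize G (S ∪ T) := by
  induction R using Finset.induction_on with
  | empty =>
      intro S _
      exact ⟨∅, Finset.Subset.refl _, by
        simp [Finset.union_empty, cutSize_eq_cnt]⟩
  | @insert r R' hrR' ih =>
      intro S hdis
      set W : Finset (Fin n) := Finset.univ \ insert r R' with hWdef
      set W' : Finset (Fin n) := Finset.univ \ R' with hW'def
      have hSr : r ∉ S := fun h => (Finset.disjoint_left.mp hdis h) (Finset.mem_insert_self r R')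
      have hSR' : Disjoint S R' := hdis.mono_right (Finset.subset_insert r R')
      have hrW : r ∉ W := by simp [hWdef]
      have hSW : S ⊆ W := by
        intro x hx
        simp only [hWdef, Finset.mem_sdiff, Finset.mem_univ, true_and]
        exact fun hmem => Finset.disjoint_left.mp hdis hx hmem
      have hW' : W' = insert r W := by
        ext x
        simp only [hW'def, hWdef, Finset.mem_sdiff, Finset.mem_univ, true_and,
          Finset.mem_insert]
        by_cases hx : x = r <;> simp [hx, hrR']
      have hrWS : r ∉ W \ S := fun h => hrW (Finset.mem_sdiff.mp h).1
      have hWS' : W' \ S = insert r (W \ S) := by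
        rw [hW', Finset.insert_sdiff_of_notMem _ hSr]
      have e1 : cnt G S (W' \ S) = cnt G S (W \ S) + cnt G S {r} := by
        rw [hWS', cnt_insert_right G S hrWS]
      have hWS2 : W' \ insert r S = W \ S := by
        ext x
        simp only [hW', Finset.mem_sdiff, Finset.mem_insert]
        constructor
        · rintro ⟨h1 | h1, h2⟩
          · exact absurd (Or.inl h1) h2
          · exact ⟨h1, fun h3 => h2 (Or.inr h3)⟩
        · rintro ⟨h1, h2⟩
          exact ⟨Or.inr h1, fun h3 => h3.elim (fun hx => hrW (hx ▸ h1)) h2⟩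
      have e2 : cnt G (insert r S) (W' \ insert r S)
          = cnt G S (W \ S) + cnt G {r} (W \ S) := by
        rw [hWS2, cnt_insert_left G _ hSr]
      have hSWsplit : S ∪ (W \ S) = W := Finset.union_sdiff_of_subset hSW
      have e4 : cnt G {r} W = cnt G {r} S + cnt G {r} (W \ S) := by
        have h := cnt_union_right G {r} (Finset.disjoint_sdiff : Disjoint S (W \ S))
        rw [hSWsplit] at h
        exact h
      have e3 : cnt G W' W' = cnt G W W + 2 * cnt G {r} W := by
        rw [hW', cnt_insert_left G _ hrW, cnt_insert_right G _ hrW,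
          cnt_insert_right G _ hrW]
        have : cnt G W {r} = cnt G {r} W := cnt_comm G W {r}
        have hloop : cnt G {r} {r} = 0 := by
          simp [cnt, Finset.filter_singleton, G.irrefl]
        omega
      have e5 : cnt G S {r} = cnt G {r} S := cnt_comm G S {r}
      rcases le_total (cnt G {r} S) (cnt G {r} (W \ S)) with hbc | hbc
      · -- put r on the S side
        have hdis2 : Disjoint (insert r S) R' := by
          rw [Finset.disjoint_insert_left]
          exact ⟨hrR', hSR'⟩
        obtain ⟨T', hT'sub, hineq⟩ := ih (insert r S) hdis2
        refine ⟨insert r T', Finset.insert_subset_insert r hT'sub, ?_⟩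
        have hunion : S ∪ insert r T' = insert r S ∪ T' := by
          rw [Finset.union_insert, Finset.insert_union]
        rw [hunion]
        have h2 : cnt G (insert r S) ((Finset.univ \ R') \ insert r S)
            = cnt G S (W \ S) + cnt G {r} (W \ S) := e2
        omega
      · -- leave r on the other side
        obtain ⟨T', hT'sub, hineq⟩ := ih S hSR'
        refine ⟨T', hT'sub.trans (Finset.subset_insert r R'), ?_⟩
        have h2 : cnt G S ((Finset.univ \ R') \ S) = cnt G S (W \ S) + cnt G S {r} := e1
        omega

lemma cutSize_le_maxCut (s : Finset (Fin n)) : cutSize G s ≤ maxCut G :=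
  Finset.le_sup (Finset.mem_powerset.mpr (Finset.subset_univ s))

end Aux

/-- If `X, Y, Z` are pairwise disjoint vertex sets of equal size such that `(X,Y)` and
`(Y,Z)` each span at least `(1-δ)|X|²` edges while `(X,Z)` spans at most `δ|X|²` edges,
then `surp(G) ≥ (1/4 - 3δ)|X|²`. -/
theorem surplus_of_dense_dense_sparse_triple {n : ℕ} (G : SimpleGraph (Fin n))
    [DecidableRel G.Adj] (δ : ℝ) (X Y Z : Finset (Fin n))
    (hXY : Disjoint X Y) (hYZ : Disjoint Y Z) (hXZ : Disjoint X Z)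
    (hcard : X.card = Y.card ∧ Y.card = Z.card)
    (hXYfull : (1 - δ) * (X.card : ℝ) ^ 2 ≤ eBetween G X Y)
    (hYZfull : (1 - δ) * (X.card : ℝ) ^ 2 ≤ eBetween G Y Z)
    (hXZempty : (eBetween G X Z : ℝ) ≤ δ * (X.card : ℝ) ^ 2) :
    (1 / 4 - 3 * δ) * (X.card : ℝ) ^ 2 ≤ surplus G := by
  obtain ⟨hcXY, hcYZ⟩ := hcard
  set W : Finset (Fin n) := X ∪ Y ∪ Z with hWdef
  set R : Finset (Fin n) := Finset.univ \ W with hRdef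
  have hUR : Finset.univ \ R = W := by
    rw [hRdef, Finset.sdiff_sdiff_self_left, Finset.univ_inter]
  have hYW : Y ⊆ W := by
    intro x hx; simp [hWdef, Finset.mem_union, hx]
  have hYR : Disjoint Y R := by
    rw [hRdef]
    exact (Finset.sdiff_disjoint.mono_right hYW).symm
  obtain ⟨T, hTR, key⟩ := greedy_cut G R Y hYR
  rw [hUR] at key
  -- identify the pieces
  have hxny : ∀ x, x ∈ X → x ∉ Y := fun x hx => Finset.disjoint_left.mp hXY hx
  have hzny : ∀ x, x ∈ Z → x ∉ Y := fun x hx => Finset.disjoint_right.mp hYZ hx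
  have hWY : W \ Y = X ∪ Z := by
    ext a
    simp only [hWdef, Finset.mem_sdiff, Finset.mem_union]
    constructor
    · rintro ⟨(h | h) | h, h2⟩
      · exact Or.inl h
      · exact absurd h h2
      · exact Or.inr h
    · rintro (h | h)
      · exact ⟨Or.inl (Or.inl h), hxny a h⟩
      · exact ⟨Or.inr h, hzny a h⟩
  have hcY : cnt G Y (W \ Y) = cnt G X Y + cnt G Y Z := by
    rw [hWY, cnt_union_right G Y hXZ, cnt_comm G Y X]
  -- decompose cnt W W
  have hXYdZ : Disjoint (X ∪ Y) Z := Finset.disjoint_union_left.mpr ⟨hXZ, hYZ⟩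
  have hsplit : ∀ s : Finset (Fin n), cnt G s W = cnt G s X + cnt G s Y + cnt G s Z := by
    intro s
    rw [hWdef, cnt_union_right G s hXYdZ, cnt_union_right G s hXY]
  have hWW : cnt G W W = cnt G W X + cnt G W Y + cnt G W Z := hsplit W
  have hWX : cnt G W X = cnt G X X + cnt G Y X + cnt G Z X := by
    rw [cnt_comm G W X, hsplit X, cnt_comm G X Y, cnt_comm G X Z]
  have hWY2 : cnt G W Y = cnt G X Y + cnt G Y Y + cnt G Z Y := by
    rw [cnt_comm G W Y, hsplit Y, cnt_comm G Y X, cnt_comm G Y Z]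
  have hWZ : cnt G W Z = cnt G X Z + cnt G Y Z + cnt G Z Z := by
    rw [cnt_comm G W Z, hsplit Z, cnt_comm G Z X, cnt_comm G Z Y]
  have hsymYX : cnt G Y X = cnt G X Y := cnt_comm G Y X
  have hsymZX : cnt G Z X = cnt G X Z := cnt_comm G Z X
  have hsymZY : cnt G Z Y = cnt G Y Z := cnt_comm G Z Y
  have hXX : cnt G X X ≤ X.card * X.card := cnt_le G X X
  have hYY : cnt G Y Y ≤ X.card * X.card := by
    have := cnt_le G Y Y; rwa [← hcXY] at this
  have hZZ : cnt G Z Z ≤ X.card * X.card := by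
    have := cnt_le G Z Z; rwa [← hcYZ, ← hcXY] at this
  have hmc : cutSize G (Y ∪ T) ≤ maxCut G := cutSize_le_maxCut G (Y ∪ T)
  have hE : cnt G Finset.univ Finset.univ = 2 * G.edgeFinset.card := cnt_univ_univ G
  -- the key natural-number inequality
  have hnat : 2 * G.edgeFinset.card + 2 * cnt G X Y + 2 * cnt G Y Z
      ≤ 3 * (X.card * X.card) + 2 * cnt G X Z + 4 * maxCut G := by
    rw [hcY] at key
    omega
  -- move to the reals
  rw [eBetween_eq_cnt] at hXYfull hYZfull hXZempty
  have hc0 : (0 : ℝ) ≤ (cnt G X Z : ℝ) := Nat.cast_nonneg _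
  have hsq : ((X.card : ℝ)) ^ 2 = (X.card : ℝ) * (X.card : ℝ) := sq (X.card : ℝ) ▸ by ring
  have hnatR : 2 * (G.edgeFinset.card : ℝ) + 2 * (cnt G X Y : ℝ) + 2 * (cnt G Y Z : ℝ)
      ≤ 3 * ((X.card : ℝ) * (X.card : ℝ)) + 2 * (cnt G X Z : ℝ) + 4 * (maxCut G : ℝ) := by
    exact_mod_cast hnat
  rw [surplus]
  nlinarith [hnatR, hXYfull, hYZfull, hXZempty, hc0]
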